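/- If t is a closed λ-term, p ∈ valid(t), and t[p] is closed, then the term nodes ⟨t, p⟩ and ⟨t[p], ε⟩ are bisimilar. -/

import Mathlib

namespace HashAlpha

/-- g-terms: λ-terms with de Bruijn indices, extended with global variables `gvar t`. -/
inductive GTerm : Type
  | var : ℕ → GTerm
  | app : GTerm → GTerm → GTerm
  | lam : GTerm → GTerm
  | gvar : GTerm → GTerm
  deriving DecidableEq

/-- A g-term is a pure λ-term if it contains no global variables. -/
def GTerm.IsPure : GTerm → Prop
  | .var _ => True
  | .app a b => a.IsPure ∧ b.IsPure
  | .lam a => a.IsPure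
  | .gvar _ => False

/-- Directions for term positions: ↓, ↙, ↘. -/
inductive Dir : Type
  | down | left | right
  deriving DecidableEq

/-- A term position is a word over {↓, ↙, ↘}. -/
abbrev Pos := List Dir

/-- `|p|_λ`: the number of ↓'s in a position. -/
def lamDepth (p : Pos) : ℕ := p.count Dir.down

/-- Term indexing `t[p]` (partial; does not descend into global variables). -/
def GTerm.index : GTerm → Pos → Option GTerm
  | t, [] => some t
  | .app a _, .left :: p => a.index p
  | .app _ b, .right :: p => b.index p
  | .lam a, .down :: p => a.index p
  | _, _ => none

/-- `valid(t)`: the set of positions where `t[p]` is defined. -/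
def Valid (t : GTerm) : Set Pos := {p | (t.index p).isSome}

/-- `vars(t)`: positions of variables. -/
def Vars (t : GTerm) : Set Pos := {p | ∃ i, t.index p = some (.var i)}

/-- `free(t)`: positions of free variables. -/
def Free (t : GTerm) : Set Pos :=
  {p | ∃ i, t.index p = some (.var i) ∧ lamDepth p ≤ i}

/-- A term is closed if it has no free variables. -/
def Closed (t : GTerm) : Prop := Free t = ∅

/-- `p` is locally closed in `t`: every free variable of `t[p]` is also free in `t`. -/
def LocallyClosed (t : GTerm) (p : Pos) : Prop :=
  p ∈ Valid t ∧ ∀ u, t.index p = some u → ∀ q ∈ Free u, p ++ q ∈ Free t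

/-- Subtract `d0` from every free variable (`d` is the current binder depth). -/
def declift (d0 : ℕ) : GTerm → ℕ → GTerm
  | .var j, d => if d ≤ j then .var (j - d0) else .var j
  | .app a b, d => .app (declift d0 a d) (declift d0 b d)
  | .lam a, d => .lam (declift d0 a (d + 1))
  | .gvar a, _ => .gvar a

/-- The lift `⟨t⟩p`: equal to `t[p]` except every free variable of `t[p]` is
decremented by `|p|_λ`. -/
def liftAt (t : GTerm) (p : Pos) : Option GTerm :=
  (t.index p).map (fun u => declift (lamDepth p) u 0)

/-- Transition labels: ↓, ↙, ↘ and ↑. -/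
inductive Lab : Type
  | down | left | right | up
  deriving DecidableEq

def Lab.ofDir : Dir → Lab
  | .down => .down
  | .left => .left
  | .right => .right

/-- Transitions between term nodes. -/
inductive Trans : GTerm × Pos → Lab → GTerm × Pos → Prop
  | dir (t : GTerm) (p : Pos) (x : Dir) :
      (p ++ [x]) ∈ Valid t → Trans (t, p) (Lab.ofDir x) (t, p ++ [x])
  | up (t : GTerm) (q r : Pos) :
      t.index (q ++ Dir.down :: r) = some (.var (lamDepth r)) →
      Trans (t, q ++ Dir.down :: r) Lab.up (t, q)

/-- `R` is a bisimulation. -/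
def IsBisim (R : GTerm × Pos → GTerm × Pos → Prop) : Prop :=
  ∀ n₁ n₂, R n₁ n₂ → ∀ x : Lab,
    (∀ n₁', Trans n₁ x n₁' → ∃ n₂', Trans n₂ x n₂' ∧ R n₁' n₂') ∧
    (∀ n₂', Trans n₂ x n₂' → ∃ n₁', Trans n₁ x n₁' ∧ R n₁' n₂')

/-- Two nodes are bisimilar when some bisimulation relates them. -/
def Bisim (n₁ n₂ : GTerm × Pos) : Prop := ∃ R, IsBisim R ∧ R n₁ n₂

/-- `(t, p)` is a term node: `t` is closed and `p ∈ valid(t)`. -/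
def IsNode (t : GTerm) (p : Pos) : Prop := Closed t ∧ p ∈ Valid t

/-- A single fork between term nodes (let-abs rule or closed rule). -/
def SingleFork (n₁ n₂ : GTerm × Pos) : Prop :=
  (∃ t p q₁ q₂ r u,
      n₁ = (t, p ++ q₁ ++ r) ∧ n₂ = (t, p ++ q₂ ++ r) ∧
      IsNode t (p ++ q₁ ++ r) ∧ IsNode t (p ++ q₂ ++ r) ∧
      t.index p = some u ∧ LocallyClosed u q₁ ∧ liftAt u q₁ = liftAt u q₂) ∨
  (∃ t₁ t₂ p₁ p₂ r u,
      n₁ = (t₁, p₁ ++ r) ∧ n₂ = (t₂, p₂ ++ r) ∧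
      IsNode t₁ (p₁ ++ r) ∧ IsNode t₂ (p₂ ++ r) ∧
      t₁.index p₁ = some u ∧ Closed u ∧ t₂.index p₂ = some u)

/-- Fork equivalence: the transitive closure of single forks. -/
def ForkEquiv : GTerm × Pos → GTerm × Pos → Prop := Relation.TransGen SingleFork

/-- Shift free variables ≥ `c` up by `d`. -/
def shiftAux (c d : ℕ) : GTerm → GTerm
  | .var j => if j < c then .var j else .var (j + d)
  | .app a b => .app (shiftAux c d a) (shiftAux c d b)
  | .lam a => .lam (shiftAux (c + 1) d a)
  | .gvar a => .gvar a

/-- Capture-avoiding substitution of free variable `i` by `u` (at current depth `d`). -/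
def substAux (i : ℕ) (u : GTerm) : ℕ → GTerm → GTerm
  | d, .var j => if j = i + d then shiftAux 0 d u else .var j
  | d, .app a b => .app (substAux i u d a) (substAux i u d b)
  | d, .lam a => .lam (substAux i u (d + 1) a)
  | _, .gvar a => .gvar a

/-- `t[i := u]`: capture-avoiding substitution of variable `i` by `u` in `t`. -/
def subst (i : ℕ) (u : GTerm) (t : GTerm) : GTerm := substAux i u 0 t

/-- Simultaneous capture-avoiding substitution of variable `i` by `σᵢ`
(at current depth `d`). -/
def msubstAux (σ : List GTerm) : ℕ → GTerm → GTerm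
  | d, .var j =>
      if j < d then .var j else shiftAux 0 d (σ.getD (j - d) (.var (j - d)))
  | d, .app a b => .app (msubstAux σ d a) (msubstAux σ d b)
  | d, .lam a => .lam (msubstAux σ (d + 1) a)
  | _, .gvar a => .gvar a

/-- `tσ`: simultaneous substitution of each variable `i` by the `i`-th element of `σ`. -/
def msubst (σ : List GTerm) (t : GTerm) : GTerm := msubstAux σ 0 t

/-- Term size (the term summary `|t|`); global variables count as leaves. -/
def gsize : GTerm → ℕ
  | .var _ => 1
  | .gvar _ => 1
  | .app a b => gsize a + gsize b + 1
  | .lam a => gsize a + 1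

theorem gsize_shiftAux (c d : ℕ) (t : GTerm) : gsize (shiftAux c d t) = gsize t := by
  induction t generalizing c with
  | var j => simp only [shiftAux]; split <;> rfl
  | app a b iha ihb => simp [shiftAux, gsize, iha, ihb]
  | lam a ih => simp [shiftAux, gsize, ih]
  | gvar a => rfl

theorem gsize_substAux_gvar (i : ℕ) (w : GTerm) (d : ℕ) (t : GTerm) :
    gsize (substAux i (.gvar w) d t) = gsize t := by
  induction t generalizing d with
  | var j => simp only [substAux]; split <;> rfl
  | app a b iha ihb => simp [substAux, gsize, iha, ihb]
  | lam a ih => simp [substAux, gsize, ih]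
  | gvar a => rfl

theorem gsize_msubstAux (σ : List GTerm) (h : ∀ u ∈ σ, ∃ w, u = .gvar w)
    (d : ℕ) (t : GTerm) : gsize (msubstAux σ d t) = gsize t := by
  induction t generalizing d with
  | var j =>
    simp only [msubstAux]
    split
    · rfl
    · rw [gsize_shiftAux]
      rcases Nat.lt_or_ge (j - d) σ.length with hl | hl
      · rw [List.getD_eq_getElem _ _ hl]
        obtain ⟨w, hw⟩ := h _ (List.getElem_mem hl)
        rw [hw]; rfl
      · rw [List.getD_eq_default _ _ hl]; rfl
  | app a b iha ihb => simp [msubstAux, gsize, iha, ihb]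
  | lam a ih => simp [msubstAux, gsize, ih]
  | gvar a => rfl

theorem gsize_msubst (σ : List GTerm) (h : ∀ u ∈ σ, ∃ w, u = .gvar w)
    (t : GTerm) : gsize (msubst σ t) = gsize t :=
  gsize_msubstAux σ h 0 t

/-- The naive globalization procedure. -/
def globalizeNaive : GTerm → GTerm
  | .lam t => .lam (globalizeNaive (subst 0 (.gvar (.lam t)) t))
  | .app t u => .app (globalizeNaive t) (globalizeNaive u)
  | .gvar t => .gvar t
  | .var i => .var i
termination_by t => gsize t
decreasing_by
  · simp only [subst, gsize_substAux_gvar, gsize]; omega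
  · simp only [gsize]; omega
  · simp only [gsize]; omega

/-- The strongly connected component of a closed g-term: positions all of whose
nonempty prefixes index open terms. -/
def SCC (t : GTerm) : Set Pos :=
  {p | p ∈ Valid t ∧ ∀ p' u, p' ≠ [] → p' <+: p → t.index p' = some u → ¬ Closed u}

/-- `duplicates(t)`: strict subterms in the SCC of `t` whose term summary (size)
is not unique within the SCC. -/
def duplicates (t : GTerm) : Set GTerm :=
  {u | ∃ p q v, p ∈ SCC t ∧ q ∈ SCC t ∧ p ≠ [] ∧ q ≠ [] ∧ p ≠ q ∧
      t.index p = some u ∧ t.index q = some v ∧ gsize u = gsize v}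

open Classical in
mutual
/-- Efficient globalization. -/
noncomputable def globalize (r : GTerm) : GTerm :=
  globalizeScc r [] (by simp) r
termination_by (gsize r, 2)
decreasing_by
  apply Prod.Lex.right; omega

noncomputable def globalizeScc (r : GTerm) (σ : List GTerm)
    (h : ∀ u ∈ σ, ∃ w, u = GTerm.gvar w) : GTerm → GTerm
  | .lam t => .lam (globalizeStep r (.gvar (.app r t) :: σ)
      (by
        intro u hu
        rcases List.mem_cons.mp hu with h' | h'
        · exact ⟨_, h'⟩
        · exact h u h') t)
  | .app t u => .app (globalizeStep r σ h t) (globalizeStep r σ h u)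
  | .gvar t => .gvar t
  | .var i => msubst σ (.var i)
termination_by t => (gsize t, 1)
decreasing_by
  · apply Prod.Lex.left; simp only [gsize]; omega
  · apply Prod.Lex.left; simp only [gsize]; omega
  · apply Prod.Lex.left; simp only [gsize]; omega

noncomputable def globalizeStep (r : GTerm) (σ : List GTerm)
    (h : ∀ u ∈ σ, ∃ w, u = GTerm.gvar w) (t : GTerm) : GTerm :=
  if Closed t ∨ t ∈ duplicates r then globalize (msubst σ t)
  else globalizeScc r σ h t
termination_by (gsize t, 3)
decreasing_by
  · rw [gsize_msubst σ h]; apply Prod.Lex.right; omega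
  · apply Prod.Lex.right; omega
end

/-! Positions below `p` in `t` correspond to positions in `u = t[p]`, and ↓, ↙, ↘ moves
correspond exactly. An ↑ move from inside `u` whose binder lies at or above `p` would start
at a variable of `u` with index at least its λ-depth in `u`, i.e. a free variable of the
closed term `u`; so ↑ moves correspond as well. -/

theorem GTerm.index_append (t : GTerm) (p q : Pos) :
    t.index (p ++ q) = (t.index p).bind (·.index q) := by
  induction p generalizing t with
  | nil => simp [GTerm.index]
  | cons x xs ih => cases t <;> cases x <;> simp [GTerm.index, ih]

theorem GTerm.index_append_of_index_eq {t u : GTerm} {p : Pos} (hp : t.index p = some u)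
    (r : Pos) : t.index (p ++ r) = u.index r := by
  rw [GTerm.index_append, hp, Option.bind_some]

theorem lamDepth_append (p q : Pos) : lamDepth (p ++ q) = lamDepth p + lamDepth q :=
  List.count_append ..

theorem Closed.lt_lamDepth_of_index_eq_var {u : GTerm} (hu : Closed u) {r : Pos} {i : ℕ}
    (h : u.index r = some (.var i)) : i < lamDepth r := by
  by_contra! hle
  exact (Set.eq_empty_iff_forall_notMem.mp hu r) ⟨i, h, hle⟩

section Subterm

variable {t u : GTerm} {p : Pos}

theorem binder_mem_closed_subterm (hp : t.index p = some u) (hu : Closed u) {r q r' : Pos}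
    (heq : p ++ r = q ++ Dir.down :: r')
    (hv : t.index (q ++ Dir.down :: r') = some (.var (lamDepth r'))) :
    ∃ q', q = p ++ q' ∧ r = q' ++ Dir.down :: r' := by
  rcases List.append_eq_append_iff.mp heq with ⟨q', rfl, hr⟩ | ⟨c, rfl, hc⟩
  · exact ⟨q', rfl, hr⟩
  cases c with
  | nil => exact ⟨[], by simp, by simpa using hc.symm⟩
  | cons d s =>
    obtain ⟨rfl, rfl⟩ := List.cons_eq_cons.mp hc
    have hvar : u.index r = some (.var (lamDepth (s ++ r))) := by
      rw [← GTerm.index_append_of_index_eq hp]; simpa using hv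
    have := hu.lt_lamDepth_of_index_eq_var hvar
    rw [lamDepth_append] at this
    omega

theorem Trans.restrict_subterm (hp : t.index p = some u) (hu : Closed u) {r : Pos} {x : Lab}
    {n : GTerm × Pos} (h : Trans (t, p ++ r) x n) :
    ∃ r', n = (t, p ++ r') ∧ Trans (u, r) x (u, r') := by
  generalize hpos : p ++ r = pos at h
  cases h with
  | dir _ _ d hd =>
    refine ⟨r ++ [d], by simp [← hpos], Trans.dir u r d ?_⟩
    rwa [Valid, Set.mem_ofPred_eq, ← GTerm.index_append_of_index_eq hp, ← List.append_assoc,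
      hpos]
  | up _ q r' hv =>
    obtain ⟨q', rfl, rfl⟩ := binder_mem_closed_subterm hp hu hpos hv
    refine ⟨q', rfl, Trans.up u q' r' ?_⟩
    rwa [← GTerm.index_append_of_index_eq hp, ← List.append_assoc]

theorem Trans.extend_subterm (hp : t.index p = some u) {r : Pos} {x : Lab}
    {n : GTerm × Pos} (h : Trans (u, r) x n) :
    ∃ r', n = (u, r') ∧ Trans (t, p ++ r) x (t, p ++ r') := by
  cases h with
  | dir _ _ d hd =>
    refine ⟨r ++ [d], rfl, ?_⟩
    rw [← List.append_assoc]
    refine Trans.dir t (p ++ r) d ?_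
    rwa [Valid, Set.mem_ofPred_eq, List.append_assoc, GTerm.index_append_of_index_eq hp]
  | up _ q r' hv =>
    refine ⟨q, rfl, ?_⟩
    rw [show p ++ (q ++ Dir.down :: r') = (p ++ q) ++ Dir.down :: r' by simp]
    refine Trans.up t (p ++ q) r' ?_
    rwa [List.append_assoc, GTerm.index_append_of_index_eq hp]

end Subterm

/-- a closed subterm within a context is bisimilar to the
subterm with no context. -/
theorem bisim_closed_subterm (t : GTerm) (ht : t.IsPure) (hc : Closed t)
    (p : Pos) (u : GTerm) (hp : t.index p = some u) (hu : Closed u) :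
    Bisim (t, p) (u, ([] : Pos)) := by
  refine ⟨fun n₁ n₂ => ∃ r, n₁ = (t, p ++ r) ∧ n₂ = (u, r), ?_, [], by simp, rfl⟩
  rintro _ _ ⟨r, rfl, rfl⟩ x
  constructor
  · intro n₁ h
    obtain ⟨r', rfl, h'⟩ := h.restrict_subterm hp hu
    exact ⟨_, h', r', rfl, rfl⟩
  · intro n₂ h
    obtain ⟨r', rfl, h'⟩ := h.extend_subterm hp
    exact ⟨_, h', r', rfl, rfl⟩

end HashAlpha
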